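/- arXiv:math/0110280 — 2 statements merged into one kernel-verified Lean document; each statement's English description precedes it below -/
import Mathlib

section
/- (m-goodness is overwhelmingly likely, even conditioned on few empty sites.) For all d ≥ 1, every p_1 ∈ (0,1] and every h > 0 there exist positive finite constants α_3 = α_3(d, p_1, h) and β_3 = β_3(d, p_1, h) such that: for every m ≥ 1, every integer k_0 with 0 ≤ k_0 ≤ n̂_d(m)^d, and every collection of distinct sites x_1, …, x_{k_0} ∈ ℤ^d for which the event {η(x_1) = ⋯ = η(x_{k_0}) = 0} has positive probability, one has P[η is (m,h)-good │ η(x_1) = ⋯ = η(x_{k_0}) = 0] ≥ 1 − α_3 · exp(−m^{β_3}). -/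
open MeasureTheory ProbabilityTheory Filter Set
open scoped ENNReal NNReal Pointwise

noncomputable section

/-- An i.i.d. family `η = (η(x))_{x ∈ ℤ^d}` of `ℕ`-valued random variables. -/
structure IIDConfig (d : ℕ) (Ω : Type) [MeasurableSpace Ω] (P : Measure Ω) where
  η : (Fin d → ℤ) → Ω → ℕ
  meas_η : ∀ x, Measurable (η x)
  η_ident : ∀ x, Measure.map (η x) P = Measure.map (η 0) P
  indep : iIndepFun η P

end

noncomputable section

/-- `ε_d = 1/(6(d-2))` (only used for `d ≥ 3`). -/
def epsd (d : ℕ) : ℝ := 1 / (6 * ((d : ℝ) - 2))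

/-- `n_d(m) = (m/h)^{1/(1+2ε_d)}` for `d ≥ 3`, and `(m/h)^{1/2}` for `d = 1, 2`. -/
def ndm (d : ℕ) (h : ℝ) (m : ℕ) : ℝ :=
  if 3 ≤ d then ((m : ℝ) / h) ^ (1 / (1 + 2 * epsd d)) else ((m : ℝ) / h) ^ ((1 : ℝ) / 2)

/-- `n̂_d(m) = n_d(m)^{(1-ε_d)/3}` for `d ≥ 3`, and `n_d(m)^{1/8}` for `d = 1, 2`. -/
def nhat (d : ℕ) (h : ℝ) (m : ℕ) : ℝ :=
  if 3 ≤ d then (ndm d h m) ^ ((1 - epsd d) / 3) else (ndm d h m) ^ ((1 : ℝ) / 8)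

/-- The Euclidean norm of a lattice point. -/
def euclNorm {d : ℕ} (x : Fin d → ℤ) : ℝ := Real.sqrt (∑ i, ((x i : ℝ)) ^ 2)

/-- `D⁽ⁿ⁾_i = {x ∈ ℤ^d : ‖x‖ ≤ i n^{1/2+ε_d}}`. -/
def Dball (d : ℕ) (n : ℝ) (i : ℕ) : Set (Fin d → ℤ) :=
  {x | euclNorm x ≤ (i : ℝ) * n ^ ((1 : ℝ) / 2 + epsd d)}

/-- The lattice points within Euclidean distance `r` of `c`. -/
def latticeBall {d : ℕ} (c : Fin d → ℤ) (r : ℝ) : Set (Fin d → ℤ) :=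
  {x | euclNorm (x - c) ≤ r}

/-- `R_ω(B)`: the density of occupied sites of the configuration `w` in the set `B`. -/
def Rdens {d : ℕ} (w : (Fin d → ℤ) → ℕ) (B : Set (Fin d → ℤ)) : ℝ :=
  (Nat.card B : ℝ)⁻¹ * ∑ᶠ x ∈ B, (if 1 ≤ w x then (1 : ℝ) else 0)

/-- A configuration `w` is `(m,h)`-good (for density level `p₁`). -/
def IsGood (d : ℕ) (p₁ h : ℝ) (m : ℕ) (w : (Fin d → ℤ) → ℕ) : Prop :=
  if 4 ≤ d then
    (∀ c : Fin d → ℤ,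
        latticeBall c ((ndm d h m) ^ ((1 - epsd d) / 2)) ⊆ Dball d (ndm d h m) 1 →
        p₁ / 2 ≤ Rdens w (latticeBall c ((ndm d h m) ^ ((1 - epsd d) / 2)))) ∧
    (∀ i : ℕ, 2 ≤ i → i ≤ d / 2 →
        p₁ / 2 ≤ Rdens w (Dball d (ndm d h m) i \ Dball d (ndm d h m) (i - 1)))
  else if d = 3 then
    ∀ c : Fin d → ℤ,
      latticeBall c ((ndm d h m) ^ ((1 - epsd d) / 2)) ⊆ Dball d (ndm d h m) 1 →
      p₁ / 2 ≤ Rdens w (latticeBall c ((ndm d h m) ^ ((1 - epsd d) / 2)))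
  else
    ∀ c : Fin d → ℤ, euclNorm c ≤ ndm d h m →
      p₁ / 2 ≤ Rdens w (latticeBall c ((ndm d h m) ^ ((1 : ℝ) / 4)))

end

open Topology Asymptotics

/-!
A configuration fails to be good only if one of polynomially many test regions is sparse: the
balls of radius `r = n^{(1-ε)/2}` (resp. `n^{1/4}`) centred within distance `n` of the origin, and
the shells `D_i \ D_{i-1}`. Each of them contains a lattice ball of radius `r/4`, hence at least
`c (m/h)^γ` sites, so by Hoeffding's inequality it is sparse with probability at most
`exp(-c' (m/h)^γ)`. By independence, conditioning on `k₀ ≤ n̂^d` prescribed empty sites multiplies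
probabilities by at most `P[η(0) = 0]^{-n̂^d} = exp(O((m/h)^γ'))`, and `γ' < γ`.
-/

lemma one_sub_le_cond {Ω : Type*} [MeasurableSpace Ω] {P : Measure Ω} [IsFiniteMeasure P]
    {s G : Set Ω} (hs : MeasurableSet s) (hs0 : P s ≠ 0) {ε : ℝ≥0∞} (hG : P Gᶜ ≤ ε * P s) :
    1 - ε ≤ P[G | s] := by
  have : IsProbabilityMeasure P[|s] := cond_isProbabilityMeasure hs0
  have hcompl : P[Gᶜ | s] ≤ ε := by
    calc P[Gᶜ | s] = (P s)⁻¹ * P (s ∩ Gᶜ) := cond_apply hs P _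
      _ ≤ (P s)⁻¹ * (ε * P s) := by gcongr; exact (measure_mono Set.inter_subset_right).trans hG
      _ = ε := by rw [mul_comm ε, ← mul_assoc, ENNReal.inv_mul_cancel hs0 (measure_ne_top P s),
          one_mul]
  rw [tsub_le_iff_right]
  calc 1 = P[G ∪ Gᶜ | s] := by rw [Set.union_compl_self, measure_univ]
    _ ≤ P[G | s] + P[Gᶜ | s] := measure_union_le _ _
    _ ≤ P[G | s] + ε := by gcongr

lemma exp_mul_log_le_pow {q x : ℝ} {k : ℕ} (hq0 : 0 ≤ q) (hq1 : q ≤ 1) (hkx : (k : ℝ) ≤ x)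
    (hqk : 0 < q ^ k) : Real.exp (x * Real.log q) ≤ q ^ k := by
  have hlog : Real.log q ≤ 0 := Real.log_nonpos hq0 hq1
  rcases Nat.eq_zero_or_pos k with rfl | hk
  · rw [pow_zero, Real.exp_le_one_iff]
    exact mul_nonpos_of_nonneg_of_nonpos (le_trans (Nat.cast_nonneg 0) hkx) hlog
  · have hq : 0 < q := by
      rcases hq0.lt_or_eq with hq | rfl
      · exact hq
      · simp [zero_pow hk.ne'] at hqk
    rw [← Real.exp_log (pow_pos hq k), Real.log_pow, Real.exp_le_exp]
    exact mul_le_mul_of_nonpos_right hkx hlog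

lemma isLittleO_rpow_rpow_atTop {δ γ : ℝ} (h : δ < γ) :
    (fun u : ℝ => u ^ δ) =o[atTop] fun u => u ^ γ := by
  have hlim : Tendsto (fun u : ℝ => u ^ (δ - γ)) atTop (𝓝 0) := by
    simpa using tendsto_rpow_neg_atTop (sub_pos.2 h)
  refine (((isLittleO_one_iff ℝ).2 hlim).mul_isBigO
    (isBigO_refl (fun u : ℝ => u ^ γ) _)).congr' ?_ (by simp)
  filter_upwards [eventually_gt_atTop 0] with u hu
  rw [← Real.rpow_add hu, sub_add_cancel]

lemma eventually_mul_pow_mul_exp_le {K c γ δ δ' : ℝ} (A B : ℝ) (k : ℕ) (hK : 0 < K)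
    (hc : 0 < c) (hγ : 0 < γ) (hδ : δ < γ) (hδ' : δ' < γ) :
    ∀ᶠ u : ℝ in atTop,
      K * u ^ k * Real.exp (-(c * u ^ γ)) ≤ Real.exp (A * u ^ δ + B * u ^ δ') := by
  have hlittle : (fun u => Real.log K + k * Real.log u - A * u ^ δ - B * u ^ δ') =o[atTop]
      fun u => u ^ γ :=
    (((isLittleO_const_left.2 <| Or.inr <|
      tendsto_norm_atTop_atTop.comp (tendsto_rpow_atTop hγ)).add
      ((isLittleO_log_rpow_atTop hγ).const_mul_left _)).sub
      ((isLittleO_rpow_rpow_atTop hδ).const_mul_left A)).sub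
      ((isLittleO_rpow_rpow_atTop hδ').const_mul_left B)
  filter_upwards [hlittle.bound hc, eventually_gt_atTop 0] with u hbound hu
  rw [Real.norm_of_nonneg (Real.rpow_nonneg hu.le _)] at hbound
  have hpoly : K * u ^ k = Real.exp (Real.log K + k * Real.log u) := by
    rw [Real.exp_add, Real.exp_log hK, Real.exp_nat_mul, Real.exp_log hu]
  rw [hpoly, ← Real.exp_add, Real.exp_le_exp]
  linarith [(Real.le_norm_self _).trans hbound]

section LatticeGeometry

variable {d : ℕ}

def toEucl (x : Fin d → ℤ) : EuclideanSpace ℝ (Fin d) := WithLp.toLp 2 fun i => (x i : ℝ)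

lemma euclNorm_eq_norm (x : Fin d → ℤ) : euclNorm x = ‖toEucl x‖ := by
  simp [euclNorm, toEucl, EuclideanSpace.norm_eq]

lemma toEucl_sub (x y : Fin d → ℤ) : toEucl (x - y) = toEucl x - toEucl y := by
  ext i; simp [toEucl]

lemma mem_latticeBall_self (c : Fin d → ℤ) {r : ℝ} (hr : 0 ≤ r) : c ∈ latticeBall c r := by
  simpa [latticeBall, euclNorm] using hr

lemma latticeBall_mono (c : Fin d → ℤ) {r r' : ℝ} (h : r ≤ r') :
    latticeBall c r ⊆ latticeBall c r' := fun _ hx => le_trans hx h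

lemma abs_euclNorm_sub_le (x y : Fin d → ℤ) :
    |euclNorm x - euclNorm y| ≤ euclNorm (x - y) := by
  simpa only [euclNorm_eq_norm, toEucl_sub] using abs_norm_sub_norm_le (toEucl x) (toEucl y)

lemma abs_apply_le_euclNorm (x : Fin d → ℤ) (i : Fin d) : |(x i : ℝ)| ≤ euclNorm x := by
  simpa [euclNorm_eq_norm, toEucl] using PiLp.norm_apply_le (toEucl x) i

lemma euclNorm_single (j : Fin d) (a : ℤ) : euclNorm (Pi.single j a) = |(a : ℝ)| := by
  rw [euclNorm, Fintype.sum_eq_single j fun i hi => by simp [hi], Pi.single_eq_same,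
    Real.sqrt_sq_eq_abs]

lemma euclNorm_le_mul_sqrt {x : Fin d → ℤ} {k : ℝ} (hk : 0 ≤ k)
    (hx : ∀ i, |(x i : ℝ)| ≤ k) : euclNorm x ≤ k * Real.sqrt d := by
  have hsum : ∑ i, (x i : ℝ) ^ 2 ≤ d * k ^ 2 := by
    simpa using Finset.sum_le_sum fun i (_ : i ∈ Finset.univ) =>
      sq_le_sq' (abs_le.1 (hx i)).1 (abs_le.1 (hx i)).2
  calc euclNorm x ≤ Real.sqrt (d * k ^ 2) := Real.sqrt_le_sqrt hsum
    _ = k * Real.sqrt d := by rw [Real.sqrt_mul (Nat.cast_nonneg d), Real.sqrt_sq hk, mul_comm]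

lemma latticeBall_subset_box (c : Fin d → ℤ) (r : ℝ) :
    latticeBall c r ⊆ Fintype.piFinset fun i => Finset.Icc (c i - ⌊r⌋₊) (c i + ⌊r⌋₊) := by
  intro x hx
  simp only [Fintype.coe_piFinset, Set.mem_pi, Set.mem_univ, Finset.coe_Icc,
    Set.mem_Icc, forall_const]
  intro i
  have hle : (x i - c i).natAbs ≤ ⌊r⌋₊ := by
    apply Nat.le_floor
    have := (abs_apply_le_euclNorm (x - c) i).trans hx
    simpa [Nat.cast_natAbs] using this
  omega

lemma latticeBall_finite (c : Fin d → ℤ) (r : ℝ) : (latticeBall c r).Finite :=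
  (Finset.finite_toSet _).subset (latticeBall_subset_box c r)

lemma card_box (c : Fin d → ℤ) (k : ℕ) :
    (Fintype.piFinset fun i => Finset.Icc (c i - k) (c i + k)).card = (2 * k + 1) ^ d := by
  have hIcc : ∀ i, (Finset.Icc (c i - k) (c i + k)).card = 2 * k + 1 := fun i => by
    rw [Int.card_Icc]; omega
  simp [Fintype.card_piFinset, hIcc]

lemma card_cube (c : Fin d → ℤ) (k : ℕ) :
    (Fintype.piFinset fun i => Finset.Icc (c i) (c i + k)).card = (k + 1) ^ d := by
  have hIcc : ∀ i, (Finset.Icc (c i) (c i + k)).card = k + 1 := fun i => by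
    rw [Int.card_Icc]; omega
  simp [Fintype.card_piFinset, hIcc]

lemma card_latticeBall_le (c : Fin d → ℤ) {r : ℝ} (hr : 0 ≤ r) :
    (Nat.card (latticeBall c r) : ℝ) ≤ (2 * r + 1) ^ d := by
  have hcard := Nat.card_mono (Finset.finite_toSet _) (latticeBall_subset_box c r)
  rw [Nat.card_coe_set_eq (SetLike.coe _), Set.ncard_coe_finset, card_box] at hcard
  refine (Nat.cast_le.2 hcard).trans ?_
  push_cast
  gcongr
  exact Nat.floor_le hr

lemma cube_subset_latticeBall (c : Fin d → ℤ) (k : ℕ) :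
    ↑(Fintype.piFinset fun i => Finset.Icc (c i) (c i + k)) ⊆
      latticeBall c (k * Real.sqrt d) := by
  intro x hx
  simp only [Fintype.coe_piFinset, Set.mem_pi, Set.mem_univ, Finset.coe_Icc, Set.mem_Icc,
    forall_const] at hx
  refine euclNorm_le_mul_sqrt (Nat.cast_nonneg k) fun i => ?_
  have h0 : 0 ≤ x i - c i := by linarith [(hx i).1]
  have hk : x i - c i ≤ k := by linarith [(hx i).2]
  rw [Pi.sub_apply, abs_of_nonneg (by exact_mod_cast h0)]
  exact_mod_cast hk

lemma le_card_latticeBall (c : Fin d → ℤ) {r : ℝ} (hr : 0 ≤ r) :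
    (r / Real.sqrt d) ^ d ≤ Nat.card (latticeBall c r) := by
  set k := ⌊r / Real.sqrt d⌋₊
  have hk : (k : ℝ) * Real.sqrt d ≤ r := by
    rcases (Real.sqrt_nonneg d).eq_or_lt with h0 | hpos
    · simp [← h0, hr]
    · exact (le_div_iff₀ hpos).1 (Nat.floor_le (by positivity))
  have hcard := Nat.card_mono (latticeBall_finite c r)
    ((cube_subset_latticeBall c k).trans fun x hx => le_trans hx hk)
  rw [Nat.card_coe_set_eq (SetLike.coe _), Set.ncard_coe_finset, card_cube] at hcard
  calc (r / Real.sqrt d) ^ d ≤ ((k : ℝ) + 1) ^ d := by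
        gcongr; exact (Nat.lt_floor_add_one _).le
    _ ≤ Nat.card (latticeBall c r) := by exact_mod_cast hcard

lemma latticeBall_single_subset_diff {R : ℝ} (hR : 0 ≤ R) {i : ℕ} (hi : 1 ≤ i) (j : Fin d) :
    latticeBall (Pi.single j ⌈((i : ℝ) - 1 / 2) * R⌉) (R / 2 - 1) ⊆
      latticeBall 0 (i * R) \ latticeBall 0 ((i - 1 : ℕ) * R) := by
  set z : Fin d → ℤ := Pi.single j ⌈((i : ℝ) - 1 / 2) * R⌉
  have hi' : (1 : ℝ) ≤ i := by exact_mod_cast hi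
  have hz : ((i : ℝ) - 1 / 2) * R ≤ euclNorm z ∧ euclNorm z < ((i : ℝ) - 1 / 2) * R + 1 := by
    have hle := Int.le_ceil (((i : ℝ) - 1 / 2) * R)
    rw [euclNorm_single, abs_of_nonneg (le_trans (by nlinarith) hle)]
    exact ⟨hle, Int.ceil_lt_add_one _⟩
  intro x hx
  have hxz := abs_le.1 ((abs_euclNorm_sub_le x z).trans hx)
  simp only [latticeBall, Set.mem_sdiff, Set.mem_ofPred_eq, sub_zero, not_le,
    Nat.cast_sub hi, Nat.cast_one]
  constructor <;> linarith

end LatticeGeometry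

noncomputable section Scales

variable {d : ℕ}

def ndmExp (d : ℕ) : ℝ := if 3 ≤ d then 1 / (1 + 2 * epsd d) else 1 / 2

def ballExp (d : ℕ) : ℝ := if 3 ≤ d then (1 - epsd d) / 2 else 1 / 4

def nhatExp (d : ℕ) : ℝ := if 3 ≤ d then (1 - epsd d) / 3 else 1 / 8

lemma epsd_pos (hd : 3 ≤ d) : 0 < epsd d := by
  have : (3 : ℝ) ≤ d := by exact_mod_cast hd
  unfold epsd; apply div_pos one_pos; linarith

lemma epsd_le (hd : 3 ≤ d) : epsd d ≤ 1 / 6 := by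
  have : (3 : ℝ) ≤ d := by exact_mod_cast hd
  unfold epsd; rw [div_le_div_iff₀ (by linarith) (by norm_num)]; linarith

lemma ndm_eq_rpow (h : ℝ) (m : ℕ) : ndm d h m = ((m : ℝ) / h) ^ ndmExp d := by
  unfold ndm ndmExp; split_ifs <;> rfl

lemma nhat_eq_rpow (h : ℝ) (m : ℕ) : nhat d h m = ndm d h m ^ nhatExp d := by
  unfold nhat nhatExp; split_ifs <;> rfl

lemma ndmExp_pos : 0 < ndmExp d := by
  unfold ndmExp; split_ifs with hd
  · have := epsd_pos hd; positivity
  · norm_num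

lemma ndmExp_le_one : ndmExp d ≤ 1 := by
  unfold ndmExp; split_ifs with hd
  · have := epsd_pos hd; rw [div_le_one (by positivity)]; linarith
  · norm_num

lemma ballExp_pos : 0 < ballExp d := by
  unfold ballExp; split_ifs with hd
  · have := epsd_le hd; linarith
  · norm_num

lemma nhatExp_lt_ballExp : nhatExp d < ballExp d := by
  unfold nhatExp ballExp; split_ifs with hd
  · have := epsd_le hd; linarith
  · norm_num

lemma ndm_le_self {h : ℝ} {m : ℕ} (hu : 1 ≤ (m : ℝ) / h) : ndm d h m ≤ (m : ℝ) / h := by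
  rw [ndm_eq_rpow]
  exact (Real.rpow_le_rpow_of_exponent_le hu ndmExp_le_one).trans_eq (Real.rpow_one _)

lemma nhat_pow {h : ℝ} {m : ℕ} (hu : 0 ≤ (m : ℝ) / h) :
    nhat d h m ^ d = ((m : ℝ) / h) ^ (ndmExp d * nhatExp d * d) := by
  rw [nhat_eq_rpow, ndm_eq_rpow, ← Real.rpow_mul hu, ← Real.rpow_mul_natCast hu]

def ballRadius (d : ℕ) (h : ℝ) (m : ℕ) : ℝ := ndm d h m ^ ballExp d

lemma ballRadius_pow {h : ℝ} {m : ℕ} (hu : 0 ≤ (m : ℝ) / h) :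
    ballRadius d h m ^ d = ((m : ℝ) / h) ^ (ndmExp d * ballExp d * d) := by
  rw [ballRadius, ndm_eq_rpow, ← Real.rpow_mul hu, ← Real.rpow_mul_natCast hu]

lemma ballRadius_nonneg {h : ℝ} {m : ℕ} (hn : 0 ≤ ndm d h m) : 0 ≤ ballRadius d h m :=
  Real.rpow_nonneg hn _

open Classical in
/-- Checking these regions suffices in every dimension: a ball inside `D_1` is centred within
`n^{1/2+ε} ≤ n` of the origin, and shells occur only for `d ≥ 4`. -/
def testRegions (d : ℕ) (h : ℝ) (m : ℕ) : Finset (Set (Fin d → ℤ)) :=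
  (latticeBall_finite 0 (ndm d h m)).toFinset.image (latticeBall · (ballRadius d h m)) ∪
    (Finset.Icc 2 (d / 2)).image fun i => Dball d (ndm d h m) i \ Dball d (ndm d h m) (i - 1)

lemma Dball_eq_latticeBall (n : ℝ) (i : ℕ) :
    Dball d n i = latticeBall 0 (i * n ^ ((1 : ℝ) / 2 + epsd d)) := by
  ext x; simp [Dball, latticeBall]

lemma latticeBall_mem_testRegions {h : ℝ} {m : ℕ} {c : Fin d → ℤ}
    (hc : euclNorm c ≤ ndm d h m) :
    latticeBall c (ballRadius d h m) ∈ testRegions d h m := by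
  classical
  refine Finset.mem_union_left _ (Finset.mem_image.2 ⟨c, ?_, rfl⟩)
  simpa [latticeBall] using hc

lemma shell_mem_testRegions {h : ℝ} {m i : ℕ} (hi2 : 2 ≤ i) (hid : i ≤ d / 2) :
    Dball d (ndm d h m) i \ Dball d (ndm d h m) (i - 1) ∈ testRegions d h m := by
  classical
  exact Finset.mem_union_right _ (Finset.mem_image.2 ⟨i, Finset.mem_Icc.2 ⟨hi2, hid⟩, rfl⟩)

lemma isGood_of_forall_mem_testRegions {p h : ℝ} {m : ℕ} {w : (Fin d → ℤ) → ℕ}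
    (hn : 1 ≤ ndm d h m) (hw : ∀ B ∈ testRegions d h m, p / 2 ≤ Rdens w B) :
    IsGood d p h m w := by
  have hball : 3 ≤ d → ∀ c : Fin d → ℤ,
      latticeBall c (ndm d h m ^ ((1 - epsd d) / 2)) ⊆ Dball d (ndm d h m) 1 →
      p / 2 ≤ Rdens w (latticeBall c (ndm d h m ^ ((1 - epsd d) / 2))) := by
    intro hd c hsub
    have hr : ballRadius d h m = ndm d h m ^ ((1 - epsd d) / 2) := by
      simp [ballRadius, ballExp, hd]
    rw [← hr] at hsub ⊢
    refine hw _ (latticeBall_mem_testRegions ?_)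
    have hc := hsub (mem_latticeBall_self c (Real.rpow_nonneg (by linarith) _))
    simp only [Dball, Set.mem_ofPred_eq, Nat.cast_one, one_mul] at hc
    calc euclNorm c ≤ ndm d h m ^ ((1 : ℝ) / 2 + epsd d) := hc
      _ ≤ ndm d h m ^ (1 : ℝ) := Real.rpow_le_rpow_of_exponent_le hn (by linarith [epsd_le hd])
      _ = ndm d h m := Real.rpow_one _
  unfold IsGood
  split_ifs with h4 h3
  · exact ⟨hball (by omega), fun i hi2 hid => hw _ (shell_mem_testRegions hi2 hid)⟩
  · exact hball (by omega)
  · intro c hc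
    have hr : ballRadius d h m = ndm d h m ^ ((1 : ℝ) / 4) := by
      simp [ballRadius, ballExp, show ¬ 3 ≤ d by omega]
    exact hr ▸ hw _ (latticeBall_mem_testRegions hc)

lemma card_testRegions_le {h : ℝ} {m : ℕ} (hn : 0 ≤ ndm d h m) :
    ((testRegions d h m).card : ℝ) ≤ (d + 1) * (2 * ndm d h m + 1) ^ d := by
  classical
  have hcenters : ((latticeBall_finite (0 : Fin d → ℤ) (ndm d h m)).toFinset.card : ℝ) ≤
      (2 * ndm d h m + 1) ^ d := by
    rw [← Set.ncard_eq_toFinset_card _ (latticeBall_finite _ _), ← Nat.card_coe_set_eq]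
    exact card_latticeBall_le 0 hn
  have hshells : ((Finset.Icc 2 (d / 2)).card : ℝ) ≤ d := by
    rw [Nat.card_Icc]; exact_mod_cast (by omega : d / 2 + 1 - 2 ≤ d)
  have hone : (1 : ℝ) ≤ (2 * ndm d h m + 1) ^ d := one_le_pow₀ (by linarith)
  calc ((testRegions d h m).card : ℝ)
      ≤ (latticeBall_finite (0 : Fin d → ℤ) (ndm d h m)).toFinset.card +
          (Finset.Icc 2 (d / 2)).card := by
        unfold testRegions
        exact_mod_cast (Finset.card_union_le _ _).trans
          (add_le_add Finset.card_image_le Finset.card_image_le)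
    _ ≤ (d + 1) * (2 * ndm d h m + 1) ^ d := by nlinarith

lemma finite_of_mem_testRegions {h : ℝ} {m : ℕ} {B : Set (Fin d → ℤ)}
    (hB : B ∈ testRegions d h m) : B.Finite := by
  classical
  unfold testRegions at hB
  simp only [Finset.mem_union, Finset.mem_image] at hB
  rcases hB with ⟨c, -, rfl⟩ | ⟨i, -, rfl⟩
  · exact latticeBall_finite c _
  · exact (Dball_eq_latticeBall (d := d) _ i ▸ latticeBall_finite 0 _).subset Set.sdiff_subset

lemma exists_latticeBall_subset_of_mem_testRegions {h : ℝ} {m : ℕ} {B : Set (Fin d → ℤ)}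
    (hn : 16 ≤ ndm d h m) (hB : B ∈ testRegions d h m) :
    ∃ c, latticeBall c (ballRadius d h m / 4) ⊆ B := by
  classical
  have hr := ballRadius_nonneg (by linarith : 0 ≤ ndm d h m)
  unfold testRegions at hB
  simp only [Finset.mem_union, Finset.mem_image, Finset.mem_Icc] at hB
  rcases hB with ⟨c, -, rfl⟩ | ⟨i, ⟨hi2, hid⟩, rfl⟩
  · exact ⟨c, latticeBall_mono c (by linarith)⟩
  have hd : 3 ≤ d := by omega
  set R := ndm d h m ^ ((1 : ℝ) / 2 + epsd d)
  have hR4 : 4 ≤ R := by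
    calc (4 : ℝ) ≤ ndm d h m ^ ((1 : ℝ) / 2) := by
          rw [← Real.sqrt_eq_rpow, Real.le_sqrt (by norm_num) (by linarith)]; linarith
      _ ≤ R := Real.rpow_le_rpow_of_exponent_le (by linarith) (by linarith [epsd_pos hd])
  have hrR : ballRadius d h m ≤ R := by
    rw [ballRadius, ballExp, if_pos hd]
    exact Real.rpow_le_rpow_of_exponent_le (by linarith) (by linarith [epsd_pos hd])
  refine ⟨Pi.single ⟨0, by omega⟩ ⌈((i : ℝ) - 1 / 2) * R⌉,
    (latticeBall_mono _ (show ballRadius d h m / 4 ≤ R / 2 - 1 by linarith)).trans ?_⟩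
  rw [Dball_eq_latticeBall, Dball_eq_latticeBall]
  exact latticeBall_single_subset_diff (by linarith) (by omega) _

end Scales

namespace IIDConfig

variable {d : ℕ} {Ω : Type} [MeasurableSpace Ω] {P : Measure Ω} (C : IIDConfig d Ω P)

def occProb : ℝ := P.real {ω | 1 ≤ C.η 0 ω}

def occ (x : Fin d → ℤ) (ω : Ω) : ℝ := if 1 ≤ C.η x ω then 1 else 0

lemma measurable_occ (x : Fin d → ℤ) : Measurable (C.occ x) :=
  (measurable_from_nat (f := fun n => if 1 ≤ n then (1 : ℝ) else 0)).comp (C.meas_η x)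

lemma measure_preimage_η (x : Fin d → ℤ) (S : Set ℕ) :
    P (C.η x ⁻¹' S) = P (C.η 0 ⁻¹' S) := by
  rw [← Measure.map_apply (C.meas_η x) (.of_discrete), C.η_ident x,
    Measure.map_apply (C.meas_η 0) (.of_discrete)]

lemma integral_occ (x : Fin d → ℤ) : ∫ ω, C.occ x ω ∂P = C.occProb := by
  have hocc : C.occ x = (C.η x ⁻¹' {n | 1 ≤ n}).indicator 1 := by
    ext ω; simp [occ, Set.indicator_apply]
  rw [hocc, integral_indicator_one (C.meas_η x (.of_discrete (s := {n | 1 ≤ n}))),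
    measureReal_def, occProb, measureReal_def]
  exact congrArg ENNReal.toReal (C.measure_preimage_η x {n | 1 ≤ n})

lemma sum_occ_eq_card_mul_rdens (s : Finset (Fin d → ℤ)) (ω : Ω) :
    ∑ x ∈ s, C.occ x ω = s.card * Rdens (fun x => C.η x ω) ↑s := by
  rcases s.eq_empty_or_nonempty with rfl | hs
  · simp
  · rw [Rdens, Nat.card_coe_set_eq, Set.ncard_coe_finset, finsum_mem_coe_finset, ← mul_assoc,
      mul_inv_cancel₀ (by exact_mod_cast hs.card_pos.ne'), one_mul]
    rfl

lemma measurableSet_forall_eq_zero {k : ℕ} (xs : Fin k → Fin d → ℤ) :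
    MeasurableSet {ω | ∀ i, C.η (xs i) ω = 0} := by
  simp only [Set.ofPred_forall]
  exact MeasurableSet.iInter fun i => C.meas_η (xs i) (measurableSet_singleton 0)

lemma measure_forall_eq_zero {k : ℕ} {xs : Fin k → Fin d → ℤ} (hxs : Function.Injective xs) :
    P {ω | ∀ i, C.η (xs i) ω = 0} = P {ω | C.η 0 ω = 0} ^ k := by
  classical
  have hset : {ω | ∀ i, C.η (xs i) ω = 0} =
      ⋂ x ∈ Finset.univ.image xs, C.η x ⁻¹' {0} := by
    ext ω; simp
  rw [hset, C.indep.measure_inter_preimage_eq_mul _ fun _ _ => measurableSet_singleton 0,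
    Finset.prod_image fun i _ j _ hij => hxs hij]
  simp_rw [C.measure_preimage_η _ {0}]
  simp only [Finset.prod_const, Finset.card_univ, Fintype.card_fin]
  rfl

variable [IsProbabilityMeasure P]

lemma measureReal_sum_occ_le (s : Finset (Fin d → ℤ)) :
    P.real {ω | ∑ x ∈ s, C.occ x ω ≤ C.occProb * s.card / 2} ≤
      Real.exp (-(C.occProb ^ 2 / 2 * s.card)) := by
  set p := C.occProb
  have hocc01 : ∀ x ω, C.occ x ω ∈ Set.Icc (0 : ℝ) 1 := fun x ω => by
    unfold occ; split_ifs <;> simp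
  have hsubG : ∀ x ∈ s,
      HasSubgaussianMGF (fun ω => p - C.occ x ω) ((‖(1 : ℝ) - 0‖₊ / 2) ^ 2) P := by
    intro x _
    convert (hasSubgaussianMGF_of_mem_Icc (μ := P) (C.measurable_occ x).aemeasurable
      (ae_of_all _ (hocc01 x))).neg using 1
    ext ω; simp [C.integral_occ x, p]
  have hindep : iIndepFun (fun x ω => p - C.occ x ω) P :=
    C.indep.comp (fun _ n => p - if 1 ≤ n then (1 : ℝ) else 0) fun _ => measurable_from_nat
  have hp : 0 ≤ p := measureReal_nonneg
  have hoeffding := HasSubgaussianMGF.measure_sum_ge_le_of_iIndepFun hindep hsubG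
    (ε := p * s.card / 2) (by positivity)
  refine le_trans (measureReal_mono fun ω hω => ?_) (hoeffding.trans_eq ?_)
  · simp only [Set.mem_ofPred_eq, Finset.sum_sub_distrib, Finset.sum_const, nsmul_eq_mul] at hω ⊢
    linarith
  · congr 1
    rcases Nat.eq_zero_or_pos s.card with h0 | hpos
    · simp [h0]
    · simp only [sub_zero, nnnorm_one, one_div, inv_pow, Finset.sum_const, nsmul_eq_mul,
        NNReal.coe_mul, NNReal.coe_natCast, NNReal.coe_inv, NNReal.coe_pow, NNReal.coe_ofNat]
      field_simp

lemma measure_rdens_lt_le {B : Set (Fin d → ℤ)} (hB : B.Finite) :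
    P {ω | Rdens (fun x => C.η x ω) B < C.occProb / 2} ≤
      ENNReal.ofReal (Real.exp (-(C.occProb ^ 2 / 2 * Nat.card B))) := by
  lift B to Finset (Fin d → ℤ) using hB
  rw [Nat.card_coe_set_eq, Set.ncard_coe_finset, ← ofReal_measureReal]
  refine ENNReal.ofReal_le_ofReal (le_trans (measureReal_mono fun ω hω => ?_)
    (C.measureReal_sum_occ_le B))
  simp only [Set.mem_ofPred_eq, C.sum_occ_eq_card_mul_rdens] at hω ⊢
  have := mul_le_mul_of_nonneg_left hω.le (Nat.cast_nonneg (α := ℝ) B.card)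
  linarith

lemma measure_exists_rdens_lt_le (𝓡 : Finset (Set (Fin d → ℤ))) (hfin : ∀ B ∈ 𝓡, B.Finite)
    {N : ℝ} (hN : ∀ B ∈ 𝓡, N ≤ Nat.card B) :
    P {ω | ∃ B ∈ 𝓡, Rdens (fun x => C.η x ω) B < C.occProb / 2} ≤
      𝓡.card * ENNReal.ofReal (Real.exp (-(C.occProb ^ 2 / 2 * N))) := by
  have hunion : {ω | ∃ B ∈ 𝓡, Rdens (fun x => C.η x ω) B < C.occProb / 2} =
      ⋃ B ∈ 𝓡, {ω | Rdens (fun x => C.η x ω) B < C.occProb / 2} := by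
    ext ω; simp
  rw [hunion, ← nsmul_eq_mul]
  refine (measure_biUnion_finset_le _ _).trans (Finset.sum_le_card_nsmul _ _ _ fun B hB => ?_)
  refine (C.measure_rdens_lt_le (hfin B hB)).trans (ENNReal.ofReal_le_ofReal ?_)
  gcongr
  exact hN B hB

lemma measure_not_isGood_le {h : ℝ} {m : ℕ} (hn : 16 ≤ ndm d h m) (hu : 1 ≤ (m : ℝ) / h) :
    P {ω | IsGood d C.occProb h m (fun x => C.η x ω)}ᶜ ≤
      ENNReal.ofReal ((d + 1) * 3 ^ d * ((m : ℝ) / h) ^ d *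
        Real.exp (-(C.occProb ^ 2 / 2 / (4 * Real.sqrt d) ^ d *
          ((m : ℝ) / h) ^ (ndmExp d * ballExp d * d)))) := by
  have hsparse : {ω | IsGood d C.occProb h m (fun x => C.η x ω)}ᶜ ⊆
      {ω | ∃ B ∈ testRegions d h m, Rdens (fun x => C.η x ω) B < C.occProb / 2} := by
    intro ω hω
    by_contra hdense
    simp only [Set.mem_ofPred_eq, not_exists, not_and, not_lt] at hdense
    exact hω (isGood_of_forall_mem_testRegions (by linarith) hdense)
  have hr := ballRadius_nonneg (by linarith : 0 ≤ ndm d h m)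
  have hcard : ∀ B ∈ testRegions d h m,
      (ballRadius d h m / 4 / Real.sqrt d) ^ d ≤ Nat.card B := by
    intro B hB
    obtain ⟨c, hc⟩ := exists_latticeBall_subset_of_mem_testRegions hn hB
    refine (le_card_latticeBall c (by positivity)).trans ?_
    exact_mod_cast Nat.card_mono (finite_of_mem_testRegions hB) hc
  refine (measure_mono hsparse).trans ((C.measure_exists_rdens_lt_le _
    (fun _ => finite_of_mem_testRegions) hcard).trans ?_)
  rw [ENNReal.ofReal_mul (by positivity), ← ENNReal.ofReal_natCast]
  refine mul_le_mul' (ENNReal.ofReal_le_ofReal ?_) (le_of_eq ?_)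
  · calc ((testRegions d h m).card : ℝ) ≤ (d + 1) * (2 * ndm d h m + 1) ^ d :=
          card_testRegions_le (by linarith)
      _ ≤ (d + 1) * 3 ^ d * ((m : ℝ) / h) ^ d := by
          rw [mul_assoc, ← mul_pow]
          gcongr
          linarith [ndm_le_self (d := d) hu]
  · rw [div_div, div_pow, ballRadius_pow (by linarith)]
    ring_nf

lemma ofReal_exp_le_measure_forall_eq_zero {k : ℕ} {xs : Fin k → Fin d → ℤ}
    (hxs : Function.Injective xs) (hs : 0 < P {ω | ∀ i, C.η (xs i) ω = 0}) {x : ℝ}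
    (hkx : (k : ℝ) ≤ x) :
    ENNReal.ofReal (Real.exp (x * Real.log (P.real {ω | C.η 0 ω = 0}))) ≤
      P {ω | ∀ i, C.η (xs i) ω = 0} := by
  have hpow : P {ω | ∀ i, C.η (xs i) ω = 0} =
      ENNReal.ofReal (P.real {ω | C.η 0 ω = 0} ^ k) := by
    rw [C.measure_forall_eq_zero hxs, ENNReal.ofReal_pow measureReal_nonneg, ofReal_measureReal]
  rw [hpow] at hs ⊢
  exact ENNReal.ofReal_le_ofReal (exp_mul_log_le_pow measureReal_nonneg measureReal_le_one hkx
    (ENNReal.ofReal_pos.1 hs))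

lemma eventually_one_sub_exp_le_cond (hd : 1 ≤ d) (hp : 0 < C.occProb) {h : ℝ} (hh : 0 < h) :
    ∃ β : ℝ, 0 < β ∧ ∀ᶠ m : ℕ in atTop, ∀ k₀ : ℕ, (k₀ : ℝ) ≤ nhat d h m ^ d →
      ∀ xs : Fin k₀ → Fin d → ℤ, Function.Injective xs → 0 < P {ω | ∀ i, C.η (xs i) ω = 0} →
        1 - ENNReal.ofReal (Real.exp (-(m : ℝ) ^ β)) ≤
          P[{ω | IsGood d C.occProb h m (fun x => C.η x ω)} | {ω | ∀ i, C.η (xs i) ω = 0}] := by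
  set γ := ndmExp d * ballExp d * d
  set γ' := ndmExp d * nhatExp d * d
  set q := P.real {ω | C.η 0 ω = 0}
  have hd' : (0 : ℝ) < d := by exact_mod_cast hd
  have hγ : 0 < γ := by have := ndmExp_pos (d := d); have := ballExp_pos (d := d); positivity
  have hγ' : γ' < γ :=
    mul_lt_mul_of_pos_right (mul_lt_mul_of_pos_left nhatExp_lt_ballExp ndmExp_pos) hd'
  have hu : Tendsto (fun m : ℕ => (m : ℝ) / h) atTop atTop :=
    tendsto_natCast_atTop_atTop.atTop_div_const hh
  have hn : ∀ᶠ m : ℕ in atTop, 16 ≤ ndm d h m := by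
    simp_rw [ndm_eq_rpow]
    exact ((tendsto_rpow_atTop ndmExp_pos).comp hu).eventually_ge_atTop 16
  have hexp := eventually_mul_pow_mul_exp_le (-h ^ (γ / 2)) (Real.log q) d
    (by positivity : (0 : ℝ) < (d + 1) * 3 ^ d)
    (by positivity : 0 < C.occProb ^ 2 / 2 / (4 * Real.sqrt d) ^ d) hγ
    (by linarith : γ / 2 < γ) hγ'
  refine ⟨γ / 2, by positivity, ?_⟩
  filter_upwards [hu.eventually hexp, hu.eventually_ge_atTop 1, hn] with m hmain hu1 hn16
  intro k₀ hk₀ xs hxs hs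
  refine one_sub_le_cond (C.measurableSet_forall_eq_zero xs) hs.ne' ?_
  have hm : (m : ℝ) ^ (γ / 2) = h ^ (γ / 2) * ((m : ℝ) / h) ^ (γ / 2) := by
    rw [← Real.mul_rpow hh.le (by linarith), mul_div_cancel₀ _ hh.ne']
  calc P {ω | IsGood d C.occProb h m (fun x => C.η x ω)}ᶜ
      ≤ ENNReal.ofReal (Real.exp (-h ^ (γ / 2) * ((m : ℝ) / h) ^ (γ / 2) +
          Real.log q * ((m : ℝ) / h) ^ γ')) :=
        (C.measure_not_isGood_le hn16 hu1).trans (ENNReal.ofReal_le_ofReal hmain)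
    _ = ENNReal.ofReal (Real.exp (-(m : ℝ) ^ (γ / 2))) *
          ENNReal.ofReal (Real.exp (((m : ℝ) / h) ^ γ' * Real.log q)) := by
        rw [← ENNReal.ofReal_mul (Real.exp_pos _).le, ← Real.exp_add, hm]
        ring_nf
    _ ≤ ENNReal.ofReal (Real.exp (-(m : ℝ) ^ (γ / 2))) * P {ω | ∀ i, C.η (xs i) ω = 0} := by
        gcongr
        exact C.ofReal_exp_le_measure_forall_eq_zero hxs hs
          (hk₀.trans_eq (nhat_pow (by linarith)))

end IIDConfig

theorem good_config_likely_general
    {d : ℕ} (hd : 1 ≤ d) {Ω : Type} [MeasurableSpace Ω] {P : Measure Ω}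
    [IsProbabilityMeasure P] (C : IIDConfig d Ω P)
    (p₁ : ℝ) (hp₁ : p₁ = (P {ω | 1 ≤ C.η 0 ω}).toReal) (hp₁pos : 0 < p₁)
    (h : ℝ) (hh : 0 < h) :
    ∃ α₃ β₃ : ℝ, 0 < α₃ ∧ 0 < β₃ ∧
      ∀ m : ℕ, 1 ≤ m →
        ∀ k₀ : ℕ, (k₀ : ℝ) ≤ (nhat d h m) ^ d →
          ∀ xs : Fin k₀ → Fin d → ℤ, Function.Injective xs →
            0 < P {ω | ∀ i, C.η (xs i) ω = 0} →
            1 - ENNReal.ofReal (α₃ * Real.exp (-(m : ℝ) ^ β₃)) ≤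
              P[{ω | IsGood d p₁ h m (fun x => C.η x ω)} | {ω | ∀ i, C.η (xs i) ω = 0}] := by
  obtain rfl : p₁ = C.occProb := hp₁
  obtain ⟨β, hβ, hev⟩ := C.eventually_one_sub_exp_le_cond hd hp₁pos hh
  obtain ⟨M, hM⟩ := eventually_atTop.1 hev
  refine ⟨Real.exp ((M : ℝ) ^ β), β, Real.exp_pos _, hβ, fun m _ k₀ hk₀ xs hxs hs => ?_⟩
  rcases le_or_gt M m with hMm | hmM
  · refine le_trans (tsub_le_tsub_left (ENNReal.ofReal_le_ofReal ?_) 1)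
      (hM m hMm k₀ hk₀ xs hxs hs)
    exact le_mul_of_one_le_left (Real.exp_pos _).le (Real.one_le_exp (by positivity))
  · have hpow : (m : ℝ) ^ β ≤ (M : ℝ) ^ β := by gcongr
    rw [tsub_eq_zero_of_le (ENNReal.one_le_ofReal.2 ?_)]
    · exact zero_le
    · rw [← Real.exp_add]
      exact Real.one_le_exp (by linarith)

/-- **`m`-goodness is overwhelmingly likely, even conditioned on few empty sites.** -/
theorem good_config_likely
    {d : ℕ} (hd : 1 ≤ d) {Ω : Type} [MeasurableSpace Ω] {P : Measure Ω}
    [IsProbabilityMeasure P] (C : IIDConfig d Ω P)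
    (p₁ : ℝ) (hp₁ : p₁ = (P {ω | 1 ≤ C.η 0 ω}).toReal) (hp₁pos : 0 < p₁) (hp₁le : p₁ ≤ 1)
    (h : ℝ) (hh : 0 < h) :
    ∃ α₃ β₃ : ℝ, 0 < α₃ ∧ 0 < β₃ ∧
      ∀ m : ℕ, 1 ≤ m →
        ∀ k₀ : ℕ, (k₀ : ℝ) ≤ (nhat d h m) ^ d →
          ∀ xs : Fin k₀ → Fin d → ℤ, Function.Injective xs →
            0 < P {ω | ∀ i, C.η (xs i) ω = 0} →
            1 - ENNReal.ofReal (α₃ * Real.exp (-(m : ℝ) ^ β₃)) ≤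
              P[{ω | IsGood d p₁ h m (fun x => C.η x ω)} | {ω | ∀ i, C.η (xs i) ω = 0}] :=
  good_config_likely_general hd C p₁ hp₁ hp₁pos h hh
end

section
/- (Stationarity of renewal-framed passage times.) Assume p_1 > 0 and fix x ∈ ℤ^d with x ≠ 0. On the event {η(0) ≥ 1}, define v_0 = 0 and v_{k+1} = min{n > v_k : η(n·x) ≥ 1} for k ≥ 0, and set Y(m,n) = T(v_m·x, v_n·x) for 0 ≤ m ≤ n. Then, under the conditional law given {η(0) ≥ 1}, for all nonnegative integers m_1 ≤ m_2 ≤ ⋯ ≤ m_j and every nonnegative integer p, the random vectors (Y(m_1, m_2), Y(m_2, m_3), …, Y(m_{j−1}, m_j)) and (Y(m_1 + p, m_2 + p), …, Y(m_{j−1} + p, m_j + p)) have the same joint distribution. -/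
open MeasureTheory ProbabilityTheory Filter Set
open scoped ENNReal NNReal Pointwise

noncomputable section

/-- The `2d` unit vectors `±e₁, …, ±e_d` of `ℤ^d`. -/
def unitVecs (d : ℕ) : Finset (Fin d → ℤ) :=
  Finset.image (fun p : Fin d × Bool => fun i => if i = p.1 then (if p.2 then 1 else -1) else 0)
    Finset.univ

/-- The uniform distribution on the `2d` unit vectors of `ℤ^d`. -/
noncomputable def stepDist (d : ℕ) : Measure (Fin d → ℤ) :=
  ((2 * d : ℕ) : ℝ≥0∞)⁻¹ • ∑ v ∈ unitVecs d, Measure.dirac v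

/-- Index type for the basic random variables of the frog model:
sites (for the initial configuration) and triples `(x, k, n)` (for the `n`-th increment of
the `k`-th walk started at `x`). -/
def frogIdx (d : ℕ) : Type := (Fin d → ℤ) ⊕ ((Fin d → ℤ) × ℕ × ℕ)

abbrev frogCodom (d : ℕ) : frogIdx d → Type := fun i =>
  match i with
  | Sum.inl _ => ℕ
  | Sum.inr _ => Fin d → ℤ

instance frogCodomMS (d : ℕ) : ∀ i : frogIdx d, MeasurableSpace (frogCodom d i) := fun i =>
  match i with
  | Sum.inl _ => inferInstance
  | Sum.inr _ => inferInstance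

/-- The frog model on `ℤ^d`: an i.i.d. initial configuration `η` and, for every site `x` and
every `k ≥ 1`, a simple random walk `S x k` started at `x`, all mutually independent. -/
structure FrogModel (d : ℕ) (Ω : Type) [MeasurableSpace Ω] (P : Measure Ω) where
  η : (Fin d → ℤ) → Ω → ℕ
  S : (Fin d → ℤ) → ℕ → ℕ → Ω → (Fin d → ℤ)
  meas_η : ∀ x, Measurable (η x)
  meas_S : ∀ x k n, Measurable (S x k n)
  S_zero : ∀ x k ω, S x k 0 ω = x
  step_law : ∀ x k n,
    Measure.map (fun ω => S x k (n + 1) ω - S x k n ω) P = stepDist d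
  η_ident : ∀ x, Measure.map (η x) P = Measure.map (η 0) P
  indep : iIndepFun (m := frogCodomMS d)
    (fun i => match i with
      | Sum.inl x => η x
      | Sum.inr q => fun ω => S q.1 q.2.1 (q.2.2 + 1) ω - S q.1 q.2.1 q.2.2 ω) P

variable {d : ℕ} {Ω : Type} [MeasurableSpace Ω] {P : Measure Ω}

/-- `t(x,z)`: the first time one of the `η(x)` walks started at `x` hits `z`
(`∞` if `η(x) = 0` or `z` is never hit). Values in `ℕ ∪ {∞} ⊆ ℝ≥0∞`. -/
noncomputable def hitT (M : FrogModel d Ω P) (x z : Fin d → ℤ) (ω : Ω) : ℝ≥0∞ :=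
  sInf {s : ℝ≥0∞ | ∃ n : ℕ, s = n ∧ ∃ k : ℕ, 1 ≤ k ∧ k ≤ M.η x ω ∧ M.S x k n ω = z}

/-- `T(x,z)`: the frog-model passage time, infimum of `Σ t(x_{i-1}, x_i)` over finite paths
from `x` to `z`. -/
noncomputable def passT (M : FrogModel d Ω P) (x z : Fin d → ℤ) (ω : Ω) : ℝ≥0∞ :=
  sInf {s : ℝ≥0∞ | ∃ m : ℕ, 1 ≤ m ∧ ∃ γ : ℕ → Fin d → ℤ, γ 0 = x ∧ γ m = z ∧
    s = ∑ i ∈ Finset.range m, hitT M (γ i) (γ (i + 1)) ω}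

/-- `ξ̄_n ⊆ ℝ^d`: the union of the unit cubes `y + (-1/2, 1/2]^d` over the sites `y`
visited by time `n`, i.e. with `T(0,y) ≤ n`. -/
def xiBar (M : FrogModel d Ω P) (n : ℕ) (ω : Ω) : Set (Fin d → ℝ) :=
  {u | ∃ y : Fin d → ℤ, passT M 0 y ω ≤ (n : ℝ≥0∞) ∧
         ∀ i, u i - (y i : ℝ) ∈ Set.Ioc (-(1/2) : ℝ) (1/2)}

/-- Passage time to a point `u ∈ ℝ^d`: the first `n` with `u ∈ ξ̄_n`. -/
noncomputable def passTR (M : FrogModel d Ω P) (u : Fin d → ℝ) (ω : Ω) : ℝ≥0∞ :=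
  sInf {s : ℝ≥0∞ | ∃ n : ℕ, s = n ∧ u ∈ xiBar M n ω}

end

/-- The renewal sequence along the ray `{n·x : n ≥ 0}`: `v 0 = 0` and
`v (k+1) = min{n > v k : η(n·x) ≥ 1}`. -/
noncomputable def vseq {d : ℕ} {Ω : Type} [MeasurableSpace Ω] {P : MeasureTheory.Measure Ω}
    (M : FrogModel d Ω P) (x : Fin d → ℤ) : ℕ → Ω → ℕ
  | 0 => fun _ => 0
  | k + 1 => fun ω => sInf {n : ℕ | vseq M x k ω < n ∧ 1 ≤ M.η (n • x) ω}

/-!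
The passage times `T` and the renewal sites `v_k` are functionals of the environment
`ω ↦ (η, walk increments)`, whose law `π` is a product measure and hence invariant under the
spatial shift `θ` by `x`. Let `R` be the first-return map of `θ` to `{η(0) ≥ 1}`. Then
`R = θ^{v_1}`, and on configurations with infinitely many occupied sites along the ray (almost
all of them under `π(· | η(0) ≥ 1)`, by Poincaré recurrence) `v_{k+1} = v_k ∘ R + v_1`. By
translation covariance of `T`, raising all indices by one amounts to composing with `R`, and
Kac's lemma says that `R` preserves `π(· | η(0) ≥ 1)`.
-/

theorem measurable_nat_sInf {α : Type*} [MeasurableSpace α] {S : α → Set ℕ}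
    (hS : ∀ n, MeasurableSet {a | n ∈ S a}) : Measurable fun a => sInf (S a) := by
  refine measurable_to_countable' fun m => ?_
  have : (fun a => sInf (S a)) ⁻¹' {m} =
      {a | m ∈ S a ∧ ∀ l < m, l ∉ S a} ∪ {a | m = 0 ∧ ∀ l, l ∉ S a} := by
    ext a
    simp only [mem_preimage, mem_singleton_iff, mem_union, mem_ofPred_eq]
    rcases (S a).eq_empty_or_nonempty with h | h
    · simp [h, eq_comm]
    · have : ¬ ∀ l, l ∉ S a := fun h' => h.ne_empty (eq_empty_of_forall_notMem h')
      simp only [this, and_false, or_false]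
      refine ⟨fun hm => hm ▸ ⟨Nat.sInf_mem h, fun l => Nat.notMem_of_lt_sInf⟩,
        fun ⟨hm, hl⟩ => ?_⟩
      exact le_antisymm (Nat.sInf_le hm) (not_lt.1 fun hlt => hl _ hlt (Nat.sInf_mem h))
  rw [this]
  simp_rw [ofPred_and, ofPred_forall]
  exact ((hS m).inter (.iInter fun l => .iInter fun (_ : l < m) => (hS l).compl)).union
    (.inter (.const _) (.iInter fun l => (hS l).compl))

theorem measurable_of_nat_family {α β : Type*} [MeasurableSpace α] [MeasurableSpace β]
    {g : ℕ → α → β} (hg : ∀ n, Measurable (g n)) {u : α → ℕ} (hu : Measurable u) :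
    Measurable fun a => g (u a) a :=
  (measurable_from_prod_countable_left (f := fun p : α × ℕ => g p.2 p.1) hg).comp
    (measurable_id.prodMk hu)

theorem ProbabilityTheory.cond_map {α β : Type*} [MeasurableSpace α] [MeasurableSpace β]
    {μ : Measure α} {f : α → β} (hf : Measurable f) {s : Set β} (hs : MeasurableSet s) :
    (μ.map f)[|s] = (μ[|f ⁻¹' s]).map f := by
  rw [cond, cond, Measure.map_smul, Measure.restrict_map hf hs, Measure.map_apply hf hs]

open scoped Classical in
theorem ENNReal.measurable_sInf_natCast {α : Type*} [MeasurableSpace α] {p : ℕ → α → Prop}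
    (hp : ∀ n, MeasurableSet {a | p n a}) :
    Measurable fun a => sInf {s : ℝ≥0∞ | ∃ n : ℕ, s = n ∧ p n a} := by
  have : (fun a => sInf {s : ℝ≥0∞ | ∃ n : ℕ, s = n ∧ p n a}) =
      fun a => ⨅ n : ℕ, if p n a then (n : ℝ≥0∞) else ∞ := by
    funext a
    refine le_antisymm (le_iInf fun n => ?_) (le_sInf ?_)
    · split_ifs with h
      exacts [sInf_le ⟨n, rfl, h⟩, le_top]
    · rintro s ⟨n, rfl, h⟩
      exact iInf_le_of_le n (by simp [h])
  rw [this]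
  exact .iInf fun n => Measurable.ite (hp n) measurable_const measurable_const

theorem Nat.sInf_lt_and_eq_add {p : ℕ → Prop} {a t : ℕ} (h : ∃ n, a < n ∧ p (n + t)) :
    sInf {m | a + t < m ∧ p m} = sInf {n | a < n ∧ p (n + t)} + t := by
  set S := {n | a < n ∧ p (n + t)}
  set T := {m | a + t < m ∧ p m}
  have hn₀ : a < sInf S ∧ p (sInf S + t) := Nat.sInf_mem h
  have hm₀ : a + t < sInf T ∧ p (sInf T) :=
    Nat.sInf_mem (s := T) ⟨sInf S + t, by omega, hn₀.2⟩
  refine le_antisymm (Nat.sInf_le (show sInf S + t ∈ T from ⟨by omega, hn₀.2⟩)) ?_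
  have : sInf S ≤ sInf T - t :=
    Nat.sInf_le ⟨by omega, by rw [Nat.sub_add_cancel (by omega)]; exact hm₀.2⟩
  omega

section FirstReturn

variable {α : Type*} {f : α → α} {s : Set α}

/-- This is `0` if the orbit of `a` never returns to `s`. -/
noncomputable def firstReturnTime (f : α → α) (s : Set α) (a : α) : ℕ :=
  sInf {n | 0 < n ∧ f^[n] a ∈ s}

noncomputable def firstReturnMap (f : α → α) (s : Set α) (a : α) : α :=
  f^[firstReturnTime f s a] a

theorem firstReturnMap_mem {a : α} (ha : ∃ n, 0 < n ∧ f^[n] a ∈ s) :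
    firstReturnMap f s a ∈ s :=
  (Nat.sInf_mem ha).2

/-- The points that visit `t` at time `n + 1` without visiting `s` at the times `1, …, n`. -/
def hitAvoiding (f : α → α) (s t : Set α) : ℕ → Set α
  | 0 => f ⁻¹' t
  | n + 1 => f ⁻¹' (hitAvoiding f s t n \ s)

theorem mem_hitAvoiding {t : Set α} {n : ℕ} {a : α} (ht : f^[n + 1] a ∈ t)
    (hs : ∀ k < n, f^[k + 1] a ∉ s) : a ∈ hitAvoiding f s t n := by
  induction n generalizing a with
  | zero => exact ht
  | succ n ih =>
    exact ⟨ih ht fun k hk => hs (k + 1) (by omega), hs 0 n.succ_pos⟩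

variable [MeasurableSpace α]

theorem measurable_firstReturnTime (hf : Measurable f) (hs : MeasurableSet s) :
    Measurable (firstReturnTime f s) :=
  measurable_nat_sInf fun n => (MeasurableSet.const (0 < n)).inter (hf.iterate n hs)

theorem measurable_firstReturnMap (hf : Measurable f) (hs : MeasurableSet s) :
    Measurable (firstReturnMap f s) :=
  measurable_of_nat_family (fun n => hf.iterate n) (measurable_firstReturnTime hf hs)

theorem measurableSet_hitAvoiding (hf : Measurable f) (hs : MeasurableSet s) {t : Set α}
    (ht : MeasurableSet t) (n : ℕ) : MeasurableSet (hitAvoiding f s t n) := by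
  induction n with
  | zero => exact hf ht
  | succ n ih => exact hf (ih.diff hs)

variable {μ : Measure α}

/-- Telescoping `μ (hitAvoiding n) = μ (s ∩ hitAvoiding n) + μ (hitAvoiding (n + 1))`. -/
theorem sum_measure_inter_hitAvoiding_le (hf : MeasurePreserving f μ μ) (hs : MeasurableSet s)
    {t : Set α} (ht : MeasurableSet t) (N : ℕ) :
    ∑ n ∈ Finset.range N, μ (s ∩ hitAvoiding f s t n) ≤ μ t := by
  have key : ∀ N, ∑ n ∈ Finset.range N, μ (s ∩ hitAvoiding f s t n) +
      μ (hitAvoiding f s t N) = μ t := by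
    intro N
    induction N with
    | zero => simpa [hitAvoiding] using hf.measure_preimage ht.nullMeasurableSet
    | succ N ih =>
      have hE := measurableSet_hitAvoiding hf.measurable hs ht N
      rw [Finset.sum_range_succ, add_assoc, hitAvoiding,
        hf.measure_preimage (hE.diff hs).nullMeasurableSet, inter_comm,
        measure_inter_add_sdiff _ hs, ih]
  exact le_of_add_le_left (key N).le

theorem MeasureTheory.Conservative.ae_exists_iterate_mem (hf : Conservative f μ)
    (hs : MeasurableSet s) :
    ∀ᵐ a ∂μ, a ∈ s → ∃ n, 0 < n ∧ f^[n] a ∈ s := by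
  filter_upwards [hf.ae_mem_imp_frequently_image_mem hs.nullMeasurableSet] with a ha has
  exact ((ha has).and_eventually (eventually_gt_atTop 0)).exists.imp fun _ h => h.symm

theorem MeasureTheory.MeasurePreserving.measure_inter_preimage_firstReturnMap_le
    [IsFiniteMeasure μ] (hf : MeasurePreserving f μ μ) (hs : MeasurableSet s) {t : Set α}
    (ht : MeasurableSet t) :
    μ (s ∩ firstReturnMap f s ⁻¹' t) ≤ μ (s ∩ t) := by
  have hcover : (s ∩ firstReturnMap f s ⁻¹' t : Set α) ≤ᵐ[μ]
      (⋃ n, s ∩ hitAvoiding f s (s ∩ t) n : Set α) := by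
    filter_upwards [hf.conservative.ae_exists_iterate_mem hs] with a ha ⟨has, hat⟩
    obtain ⟨hpos, -⟩ := Nat.sInf_mem (ha has)
    obtain ⟨n, hn⟩ : ∃ n, firstReturnTime f s a = n + 1 := Nat.exists_eq_add_one.2 hpos
    refine mem_iUnion.2 ⟨n, has, mem_hitAvoiding ?_ fun k hk hks => ?_⟩
    · rw [← hn]
      exact ⟨firstReturnMap_mem (ha has), hat⟩
    · exact Nat.notMem_of_lt_sInf (show k + 1 < firstReturnTime f s a by omega)
        ⟨k.succ_pos, hks⟩
  calc μ (s ∩ firstReturnMap f s ⁻¹' t)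
      ≤ μ (⋃ n, s ∩ hitAvoiding f s (s ∩ t) n) := measure_mono_ae hcover
    _ ≤ ∑' n, μ (s ∩ hitAvoiding f s (s ∩ t) n) := measure_iUnion_le _
    _ ≤ μ (s ∩ t) := ENNReal.tsum_le_of_sum_range_le
        (sum_measure_inter_hitAvoiding_le hf hs (hs.inter ht))

/-- Kac's lemma. -/
theorem MeasureTheory.MeasurePreserving.firstReturnMap_restrict [IsFiniteMeasure μ]
    (hf : MeasurePreserving f μ μ) (hs : MeasurableSet s) :
    MeasurePreserving (firstReturnMap f s) (μ.restrict s) (μ.restrict s) := by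
  have hT := measurable_firstReturnMap hf.measurable hs
  -- the first-return map cannot increase the mass of a set, and it preserves the total mass
  refine ⟨hT, Measure.eq_of_le_of_measure_univ_eq (Measure.le_iff.2 fun t ht => ?_) ?_⟩
  · rw [Measure.map_apply hT ht, Measure.restrict_apply (hT ht), Measure.restrict_apply ht,
      inter_comm, inter_comm t]
    exact hf.measure_inter_preimage_firstReturnMap_le hs ht
  · rw [Measure.map_apply hT .univ, preimage_univ]

theorem MeasureTheory.MeasurePreserving.map_eq_of_ae_eq_comp {β : Type*} [MeasurableSpace β]
    (hf : MeasurePreserving f μ μ) {Y : ℕ → α → β} (hY : ∀ n, Measurable (Y n))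
    (hstep : ∀ n, Y (n + 1) =ᵐ[μ] Y n ∘ f) (n : ℕ) : μ.map (Y n) = μ.map (Y 0) := by
  induction n with
  | zero => rfl
  | succ n ih =>
    rw [Measure.map_congr (hstep n), ← Measure.map_map (hY n) hf.measurable, hf.map_eq, ih]

end FirstReturn

namespace FrogModel

variable {d : ℕ} {Ω : Type} [MeasurableSpace Ω] {P : Measure Ω}

theorem passT_eq_iInf (M : FrogModel d Ω P) (a b : Fin d → ℤ) (ω : Ω) :
    passT M a b ω = ⨅ (m : ℕ) (γ : Fin (m + 1) → Fin d → ℤ)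
      (_ : 1 ≤ m ∧ γ 0 = a ∧ γ (Fin.last m) = b),
        ∑ i : Fin m, hitT M (γ i.castSucc) (γ i.succ) ω := by
  refine le_antisymm (le_iInf₂ fun m γ => le_iInf fun ⟨hm, h0, hm'⟩ => ?_) (le_sInf ?_)
  · refine sInf_le ⟨m, hm, fun i => γ (Fin.ofNat (m + 1) i), by simpa using h0, ?_, ?_⟩
    · simpa [Fin.ofNat, Fin.last] using hm'
    · rw [Finset.sum_range]
      refine Fintype.sum_congr _ _ fun i => ?_
      congr 2 <;> ext <;> simp [Nat.mod_eq_of_lt, i.is_lt]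
  · rintro s ⟨m, hm, γ, h0, hm', rfl⟩
    refine iInf₂_le_of_le m (fun i => γ i) (iInf_le_of_le ⟨hm, h0, hm'⟩ ?_)
    rw [← Fin.sum_univ_eq_sum_range (fun i => hitT M (γ i) (γ (i + 1)) ω)]
    simp

theorem measurable_hitT (M : FrogModel d Ω P) (x z : Fin d → ℤ) :
    Measurable (hitT M x z) := by
  refine ENNReal.measurable_sInf_natCast fun n => ?_
  simp only [ofPred_exists, ofPred_and]
  refine .iUnion fun k => .inter (.const _) (.inter ?_ ?_)
  · exact measurableSet_le measurable_const (M.meas_η x)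
  · exact M.meas_S x k n (measurableSet_singleton z)

theorem measurable_passT (M : FrogModel d Ω P) (a b : Fin d → ℤ) :
    Measurable (passT M a b) := by
  simp_rw [funext (M.passT_eq_iInf a b)]
  exact .iInf fun m => .iInf fun γ => .iInf fun _ =>
    Finset.measurable_sum _ fun _ _ => M.measurable_hitT _ _

theorem measurable_vseq (M : FrogModel d Ω P) (x : Fin d → ℤ) (k : ℕ) :
    Measurable (vseq M x k) := by
  induction k with
  | zero => exact measurable_const
  | succ k ih =>
    exact measurable_nat_sInf fun n =>
      (measurableSet_lt ih measurable_const).inter (measurableSet_le measurable_const (M.meas_η _))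

abbrev Env (d : ℕ) : Type := ∀ i : frogIdx d, frogCodom d i

def env (M : FrogModel d Ω P) (ω : Ω) : Env d
  | Sum.inl y => M.η y ω
  | Sum.inr q => M.S q.1 q.2.1 (q.2.2 + 1) ω - M.S q.1 q.2.1 q.2.2 ω

theorem iIndepFun_env (M : FrogModel d Ω P) : iIndepFun (fun i ω => M.env ω i) P := by
  convert M.indep using 2 with i
  rcases i <;> rfl

theorem measurable_env (M : FrogModel d Ω P) : Measurable M.env := by
  refine measurable_pi_lambda _ fun i => ?_
  rcases i with y | q
  · exact M.meas_η y
  · exact (M.meas_S _ _ _).sub (M.meas_S _ _ _)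

def envWalk (x : Fin d → ℤ) (k n : ℕ) (c : Env d) : Fin d → ℤ :=
  x + ∑ i ∈ Finset.range n, c (Sum.inr (x, k, i))

theorem envWalk_succ_sub (x : Fin d → ℤ) (k n : ℕ) (c : Env d) :
    envWalk x k (n + 1) c - envWalk x k n c = c (Sum.inr (x, k, n)) := by
  simp [envWalk, Finset.sum_range_succ]

theorem measurable_envWalk (x : Fin d → ℤ) (k n : ℕ) :
    Measurable (envWalk x k n : Env d → Fin d → ℤ) :=
  measurable_const.add <|
    Finset.measurable_sum _ fun _ _ => measurable_pi_apply (X := frogCodom d) _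

theorem S_eq_envWalk (M : FrogModel d Ω P) (x : Fin d → ℤ) (k n : ℕ) (ω : Ω) :
    M.S x k n ω = envWalk x k n (M.env ω) := by
  induction n with
  | zero => simp [envWalk, M.S_zero]
  | succ n ih =>
    have hinc : M.env ω (Sum.inr (x, k, n)) = M.S x k (n + 1) ω - M.S x k n ω := rfl
    rw [← sub_add_cancel (envWalk x k (n + 1) (M.env ω)) (envWalk x k n (M.env ω)),
      envWalk_succ_sub, ← ih, hinc, sub_add_cancel]

def marginal (ρ : Measure ℕ) (σ : Measure (Fin d → ℤ)) :
    ∀ i : frogIdx d, Measure (frogCodom d i)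
  | Sum.inl _ => ρ
  | Sum.inr _ => σ

instance {ρ : Measure ℕ} {σ : Measure (Fin d → ℤ)} [IsProbabilityMeasure ρ]
    [IsProbabilityMeasure σ] (i : frogIdx d) : IsProbabilityMeasure (marginal ρ σ i) := by
  rcases i <;> assumption

def shiftIdx (z : Fin d → ℤ) : frogIdx d ↪ frogIdx d where
  toFun
    | Sum.inl y => Sum.inl (y + z)
    | Sum.inr q => Sum.inr (q.1 + z, q.2)
  inj' := by
    rintro (a | a) (b | b) h
    · exact congrArg Sum.inl (add_right_cancel (Sum.inl.inj h))
    · exact absurd h Sum.inl_ne_inr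
    · exact absurd h Sum.inr_ne_inl
    · obtain ⟨h₁, h₂⟩ := Prod.mk.inj (Sum.inr.inj h)
      exact congrArg Sum.inr (Prod.ext (add_right_cancel h₁) h₂)

@[simp] theorem shiftIdx_inl (z y : Fin d → ℤ) : shiftIdx z (Sum.inl y) = Sum.inl (y + z) := rfl

@[simp] theorem shiftIdx_inr (z : Fin d → ℤ) (q : (Fin d → ℤ) × ℕ × ℕ) :
    shiftIdx z (Sum.inr q) = Sum.inr (q.1 + z, q.2) := rfl

def shift (z : Fin d → ℤ) (c : Env d) : Env d
  | Sum.inl y => c (Sum.inl (y + z))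
  | Sum.inr q => c (Sum.inr (q.1 + z, q.2))

theorem measurable_shift (z : Fin d → ℤ) : Measurable (shift z : Env d → Env d) := by
  refine measurable_pi_lambda _ fun i => ?_
  rcases i with y | q
  · exact measurable_pi_apply (X := frogCodom d) (Sum.inl (y + z))
  · exact measurable_pi_apply (X := frogCodom d) (Sum.inr (q.1 + z, q.2))

theorem shift_zero (c : Env d) : shift 0 c = c := by
  funext i
  rcases i with y | q
  · exact congrArg (fun y => c (Sum.inl y)) (add_zero y)
  · exact congrArg (fun y => c (Sum.inr (y, q.2))) (add_zero q.1)

theorem shift_add (z w : Fin d → ℤ) (c : Env d) : shift (z + w) c = shift z (shift w c) := by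
  funext i
  rcases i with y | q
  · exact congrArg (fun y => c (Sum.inl y)) (add_assoc y z w).symm
  · exact congrArg (fun y => c (Sum.inr (y, q.2))) (add_assoc q.1 z w).symm

theorem iterate_shift (x : Fin d → ℤ) (n : ℕ) (c : Env d) :
    (shift x)^[n] c = shift (n • x) c := by
  induction n with
  | zero => rw [zero_nsmul, shift_zero]; rfl
  | succ n ih => rw [Function.iterate_succ_apply', ih, ← shift_add, succ_nsmul']

theorem shift_apply_inl (z y : Fin d → ℤ) (c : Env d) :
    shift z c (Sum.inl y) = c (Sum.inl (y + z)) :=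
  rfl

theorem envWalk_add (a z : Fin d → ℤ) (k n : ℕ) (c : Env d) :
    envWalk (a + z) k n c = envWalk a k n (shift z c) + z := by
  simp only [envWalk]
  abel_nf
  rfl

theorem measurePreserving_shift_infinitePi (ρ : Measure ℕ) (σ : Measure (Fin d → ℤ))
    [IsProbabilityMeasure ρ] [IsProbabilityMeasure σ] (z : Fin d → ℤ) :
    MeasurePreserving (shift z) (Measure.infinitePi (marginal ρ σ))
      (Measure.infinitePi (marginal ρ σ)) := by
  refine ⟨measurable_shift z, Measure.eq_infinitePi _ fun s t ht => ?_⟩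
  let t' : ∀ i : frogIdx d, Set (frogCodom d i)
    | Sum.inl y => t (Sum.inl (y - z))
    | Sum.inr q => t (Sum.inr (q.1 - z, q.2))
  have ht' : ∀ i, MeasurableSet (t' i) := by
    rintro (y | q)
    exacts [ht _, ht _]
  -- the preimage of a box under the shift is a box over the shifted index set
  have hpre : shift z ⁻¹' (s : Set (frogIdx d)).pi t =
      ((s.map (shiftIdx z) : Finset (frogIdx d)) : Set (frogIdx d)).pi t' := by
    ext c
    simp only [mem_preimage, Set.mem_pi, Finset.coe_map, Finset.mem_coe, forall_mem_image]
    refine forall₂_congr fun i _ => ?_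
    rcases i with y | q <;> simp only [shift, t', shiftIdx_inl, shiftIdx_inr] <;>
      rw [add_sub_cancel_right] <;> rfl
  rw [Measure.map_apply (measurable_shift z) (.pi s.countable_toSet fun i _ => ht i), hpre,
    Measure.infinitePi_pi _ fun i _ => ht' i, Finset.prod_map]
  refine Finset.prod_congr rfl fun i _ => ?_
  rcases i with y | q <;> simp only [t', marginal, shiftIdx_inl, shiftIdx_inr] <;>
    rw [add_sub_cancel_right] <;> rfl

theorem isProbabilityMeasure_stepDist [IsProbabilityMeasure P] (M : FrogModel d Ω P) :
    IsProbabilityMeasure (stepDist d) := by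
  rw [← M.step_law 0 1 0]
  exact Measure.isProbabilityMeasure_map ((M.meas_S _ _ _).sub (M.meas_S _ _ _)).aemeasurable

instance [IsProbabilityMeasure P] (M : FrogModel d Ω P) :
    IsProbabilityMeasure (P.map (M.η 0)) :=
  Measure.isProbabilityMeasure_map (M.meas_η 0).aemeasurable

theorem map_env_eq_infinitePi [IsProbabilityMeasure P] [IsProbabilityMeasure (stepDist d)]
    (M : FrogModel d Ω P) :
    P.map M.env = Measure.infinitePi (marginal (P.map (M.η 0)) (stepDist d)) := by
  refine (M.iIndepFun_env.map_fun_eq_infinitePi_map fun i =>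
    (measurable_pi_apply i).comp M.measurable_env).trans ?_
  congr 1
  funext i
  rcases i with y | q
  · exact M.η_ident y
  · exact M.step_law _ _ _

theorem measurePreserving_shift [IsProbabilityMeasure P] (M : FrogModel d Ω P)
    (z : Fin d → ℤ) :
    MeasurePreserving (shift z) (P.map M.env) (P.map M.env) := by
  have := M.isProbabilityMeasure_stepDist
  rw [M.map_env_eq_infinitePi]
  exact measurePreserving_shift_infinitePi _ _ z

/-- Shifts act on `Env d` rather than on `Ω`, so the frog functionals are transported to this
model of the canonical environment (see `passT_eq_canonical`). -/
def canonical [IsProbabilityMeasure P] (M : FrogModel d Ω P) :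
    FrogModel d (Env d) (P.map M.env) where
  η y c := c (Sum.inl y)
  S := envWalk
  meas_η y := measurable_pi_apply (X := frogCodom d) _
  meas_S := measurable_envWalk
  S_zero x k c := by simp [envWalk]
  step_law x k n := by
    have := M.isProbabilityMeasure_stepDist
    simp_rw [envWalk_succ_sub, M.map_env_eq_infinitePi]
    exact Measure.infinitePi_map_eval (ι := frogIdx d) _ (Sum.inr (x, k, n))
  η_ident y := by
    have := M.isProbabilityMeasure_stepDist
    rw [M.map_env_eq_infinitePi]
    have h := Measure.infinitePi_map_eval (marginal (P.map (M.η 0)) (stepDist d))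
    exact (h (Sum.inl y)).trans (h (Sum.inl 0)).symm
  indep := by
    have := M.isProbabilityMeasure_stepDist
    rw [M.map_env_eq_infinitePi]
    convert iIndepFun_infinitePi (P := marginal (P.map (M.η 0)) (stepDist d))
      (X := fun _ => id) (fun _ => measurable_id) using 2 with i
    rcases i with y | q
    · rfl
    · exact funext (envWalk_succ_sub q.1 q.2.1 q.2.2)

section Canonical

variable [IsProbabilityMeasure P] (M : FrogModel d Ω P)

theorem hitT_eq_canonical (x z : Fin d → ℤ) (ω : Ω) :
    hitT M x z ω = hitT M.canonical x z (M.env ω) := by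
  simp only [hitT, M.S_eq_envWalk]
  rfl

theorem passT_eq_canonical (a b : Fin d → ℤ) (ω : Ω) :
    passT M a b ω = passT M.canonical a b (M.env ω) := by
  simp only [passT, hitT_eq_canonical]

theorem vseq_eq_canonical (x : Fin d → ℤ) (k : ℕ) (ω : Ω) :
    vseq M x k ω = vseq M.canonical x k (M.env ω) := by
  induction k with
  | zero => rfl
  | succ k ih => simp only [vseq, ih]; rfl

theorem hitT_shift (a b z : Fin d → ℤ) (c : Env d) :
    hitT M.canonical a b (shift z c) = hitT M.canonical (a + z) (b + z) c := by
  simp only [hitT, canonical, envWalk_add, add_left_inj]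
  rfl

theorem passT_shift (a b z : Fin d → ℤ) (c : Env d) :
    passT M.canonical a b (shift z c) = passT M.canonical (a + z) (b + z) c := by
  simp only [passT, hitT_shift]
  congr 1
  ext s
  constructor
  · rintro ⟨m, hm, γ, h₀, hm', rfl⟩
    exact ⟨m, hm, fun i => γ i + z, by simp [h₀], by simp [hm'], rfl⟩
  · rintro ⟨m, hm, γ, h₀, hm', rfl⟩
    refine ⟨m, hm, fun i => γ i - z, by simp [h₀], by simp [hm'], ?_⟩
    simp only [sub_add_cancel]

end Canonical

def originOccupied : Set (Env d) := {c | 1 ≤ c (Sum.inl 0)}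

theorem measurableSet_originOccupied : MeasurableSet (originOccupied : Set (Env d)) :=
  measurable_pi_apply (X := frogCodom d) (Sum.inl 0) measurableSet_Ici

theorem iterate_shift_mem_originOccupied {x : Fin d → ℤ} {n : ℕ} {c : Env d} :
    (shift x)^[n] c ∈ originOccupied ↔ 1 ≤ c (Sum.inl (n • x)) := by
  rw [iterate_shift, originOccupied, mem_ofPred_eq, shift_apply_inl, zero_add]

section Renewal

variable [IsProbabilityMeasure P] (M : FrogModel d Ω P) (x : Fin d → ℤ)

theorem firstReturnMap_shift (c : Env d) :
    firstReturnMap (shift x) originOccupied c = shift (vseq M.canonical x 1 c • x) c := by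
  have : firstReturnTime (shift x) originOccupied c = vseq M.canonical x 1 c := by
    simp only [firstReturnTime, iterate_shift_mem_originOccupied]
    rfl
  rw [firstReturnMap, this, iterate_shift]

theorem vseq_succ {c : Env d} (hc : ∃ᶠ n : ℕ in atTop, 1 ≤ c (Sum.inl (n • x)))
    (k : ℕ) :
    vseq M.canonical x (k + 1) c =
      vseq M.canonical x k (shift (vseq M.canonical x 1 c • x) c) + vseq M.canonical x 1 c := by
  set t := vseq M.canonical x 1 c
  set c' := shift (t • x) c
  have hc' : ∀ n : ℕ, c' (Sum.inl (n • x)) = c (Sum.inl ((n + t) • x)) := fun n =>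
    congrArg (fun y => c (Sum.inl y)) (add_nsmul x n t).symm
  induction k with
  | zero => exact (zero_add t).symm
  | succ k ih =>
    have hne : ∃ n, vseq M.canonical x k c' < n ∧ 1 ≤ c (Sum.inl ((n + t) • x)) := by
      obtain ⟨m, hm, hpm⟩ := frequently_atTop.1 hc (vseq M.canonical x k c' + t + 1)
      exact ⟨m - t, by omega, by rwa [Nat.sub_add_cancel (by omega)]⟩
    change sInf {n | vseq M.canonical x (k + 1) c < n ∧ 1 ≤ c (Sum.inl (n • x))} =
      sInf {n | vseq M.canonical x k c' < n ∧ 1 ≤ c' (Sum.inl (n • x))} + t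
    simp_rw [ih, hc']
    exact Nat.sInf_lt_and_eq_add hne

theorem passT_vseq_succ {c : Env d} (hc : ∃ᶠ n : ℕ in atTop, 1 ≤ c (Sum.inl (n • x)))
    (a b : ℕ) :
    passT M.canonical (vseq M.canonical x (a + 1) c • x) (vseq M.canonical x (b + 1) c • x) c =
      passT M.canonical (vseq M.canonical x a (firstReturnMap (shift x) originOccupied c) • x)
        (vseq M.canonical x b (firstReturnMap (shift x) originOccupied c) • x)
        (firstReturnMap (shift x) originOccupied c) := by
  rw [firstReturnMap_shift M x, passT_shift M, ← add_nsmul, ← add_nsmul, ← vseq_succ M x hc,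
    ← vseq_succ M x hc]

theorem ae_cond_frequently_occupied :
    ∀ᵐ c ∂(P.map M.env)[|originOccupied],
      ∃ᶠ n : ℕ in atTop, 1 ≤ c (Sum.inl (n • x)) := by
  have hrec := (M.measurePreserving_shift x).conservative.ae_mem_imp_frequently_image_mem
    measurableSet_originOccupied.nullMeasurableSet
  filter_upwards [cond_absolutelyContinuous.ae_le hrec, ae_cond_mem measurableSet_originOccupied]
    with c hc hcO
  simpa only [iterate_shift_mem_originOccupied] using hc hcO

end Renewal

end FrogModel

open FrogModel in
theorem frog_renewal_stationarity_general
    {d : ℕ} {Ω : Type} [MeasurableSpace Ω] {P : Measure Ω}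
    [IsProbabilityMeasure P] (M : FrogModel d Ω P)
    (x : Fin d → ℤ) :
    ∀ (j : ℕ) (ms : Fin (j + 1) → ℕ), Monotone ms → ∀ p : ℕ,
      Measure.map
          (fun ω => fun i : Fin j =>
            passT M ((vseq M x (ms i.castSucc) ω) • x) ((vseq M x (ms i.succ) ω) • x) ω)
          (P[|{ω | 1 ≤ M.η 0 ω}]) =
        Measure.map
          (fun ω => fun i : Fin j =>
            passT M ((vseq M x (ms i.castSucc + p) ω) • x) ((vseq M x (ms i.succ + p) ω) • x) ω)
          (P[|{ω | 1 ≤ M.η 0 ω}]) := by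
  intro j ms _ p
  let Y : ℕ → Env d → Fin j → ℝ≥0∞ := fun q c i => passT M.canonical
    (vseq M.canonical x (ms i.castSucc + q) c • x) (vseq M.canonical x (ms i.succ + q) c • x) c
  have hY : ∀ q, Measurable (Y q) := fun q => measurable_pi_lambda _ fun i =>
    measurable_of_nat_family (fun m => measurable_of_nat_family
      (fun n => M.canonical.measurable_passT (m • x) (n • x)) (M.canonical.measurable_vseq x _))
      (M.canonical.measurable_vseq x _)
  have hlaw : ∀ q, Measure.map (fun ω i => passT M (vseq M x (ms i.castSucc + q) ω • x)
      (vseq M x (ms i.succ + q) ω • x) ω) (P[|{ω | 1 ≤ M.η 0 ω}]) =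
        ((P.map M.env)[|originOccupied]).map (Y q) := fun q => by
    rw [cond_map M.measurable_env measurableSet_originOccupied,
      Measure.map_map (hY q) M.measurable_env]
    simp only [Function.comp_def, Y, ← passT_eq_canonical, ← vseq_eq_canonical]
    rfl
  have hT := ((M.measurePreserving_shift x).firstReturnMap_restrict
    measurableSet_originOccupied).smul_measure ((P.map M.env) originOccupied)⁻¹
  refine (hlaw 0).trans (Eq.trans ?_ (hlaw p).symm)
  refine (hT.map_eq_of_ae_eq_comp hY (fun q => ?_) p).symm
  filter_upwards [M.ae_cond_frequently_occupied x] with c hc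
  -- `ms i + (q + 1)` is `(ms i + q) + 1` by definition
  exact funext fun i => M.passT_vseq_succ x hc _ _

/-- **Stationarity of renewal-framed passage times.** With `Y(m,n) = T(v_m·x, v_n·x)`, under
the conditional law given `{η(0) ≥ 1}`, for all `m₁ ≤ m₂ ≤ ⋯ ≤ m_j` and every `p ≥ 0`, the
vectors `(Y(m₁,m₂), …, Y(m_{j-1},m_j))` and `(Y(m₁+p,m₂+p), …, Y(m_{j-1}+p,m_j+p))` have the
same joint distribution. -/
theorem frog_renewal_stationarity
    {d : ℕ} (hd : 1 ≤ d) {Ω : Type} [MeasurableSpace Ω] {P : Measure Ω}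
    [IsProbabilityMeasure P] (M : FrogModel d Ω P)
    (hp : 0 < P {ω | 1 ≤ M.η 0 ω})
    (x : Fin d → ℤ) (hx : x ≠ 0) :
    ∀ (j : ℕ) (ms : Fin (j + 1) → ℕ), Monotone ms → ∀ p : ℕ,
      Measure.map
          (fun ω => fun i : Fin j =>
            passT M ((vseq M x (ms i.castSucc) ω) • x) ((vseq M x (ms i.succ) ω) • x) ω)
          (P[|{ω | 1 ≤ M.η 0 ω}]) =
        Measure.map
          (fun ω => fun i : Fin j =>
            passT M ((vseq M x (ms i.castSucc + p) ω) • x) ((vseq M x (ms i.succ + p) ω) • x) ω)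
          (P[|{ω | 1 ≤ M.η 0 ω}]) :=
  frog_renewal_stationarity_general M x
end
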